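/- Let m ≥ 1, i ≥ 3 and 0 ≤ k ≤ i−1 be integers and set j = 4m. Let G be the simple graph on the vertex set (Fin j) × (ZMod i) whose edges are all edges of the twisted toroidal grid T(i,j,k) together with the diagonal edges {(b,a),(b+1,a+1)} for all a ∈ ZMod i and all b with 0 ≤ b ≤ j−2 and b ≡ 1, 2 or 3 (mod 4), and the wrap-around diagonal edges {(j−1,a),(0,a+k+1)} for all a ∈ ZMod i. Then G has a Hamiltonian cycle. -/

import Mathlib

/-- The twisted toroidal grid `T(i,j,k)` on vertex set `Fin j × ZMod i`, with row edges
`{(b,a),(b,a+1)}`, vertical edges `{(b,a),(b+1,a)}` for `0 ≤ b < j-1`, and wrap-around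
edges `{(j-1,a),(0,a+k)}`. -/
def twistedGrid (i j k : ℕ) : SimpleGraph (Fin j × ZMod i) :=
  SimpleGraph.fromRel (fun p q =>
    (p.1 = q.1 ∧ q.2 = p.2 + 1) ∨
    ((q.1 : ℕ) = (p.1 : ℕ) + 1 ∧ q.2 = p.2) ∨
    ((p.1 : ℕ) = j - 1 ∧ (q.1 : ℕ) = 0 ∧ q.2 = p.2 + (k : ZMod i)))

/-!
The twisted grid `T(i,j,k)` is a spanning subgraph of the graph in question, and for even `j`
it is already Hamiltonian. With `g = gcd(i,k)`, sweep the rows `0, …, j-1` inside a strip of `g`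
consecutive columns, alternately left to right and right to left (a snake); as `j` is even, the
last row ends in the strip's first column, from where the wrap-around edge enters row `0` at the
strip shifted by `k`. The shifts `t • k` for `t < i / g = addOrderOf (k : ZMod i)` are distinct
multiples of `g`, so these strips tile every row exactly once and the snake closes up after
`i / g` passes.
-/

namespace SimpleGraph

theorem cycleGraph.isHamiltonianCycle_cycle (n : ℕ) : (cycleGraph.cycle n).IsHamiltonianCycle :=
  Walk.isHamiltonianCycle_iff_isCycle_and_length_eq.2 ⟨cycleGraph.isCycle_cycle, by simp⟩

theorem exists_isHamiltonianCycle_of_injOn {V : Type*} [Fintype V] [DecidableEq V]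
    {G : SimpleGraph V} {N : ℕ} (hN : 3 ≤ N) (hcard : Fintype.card V = N) (f : ℕ → V)
    (hadj : ∀ n, G.Adj (f n) (f (n + 1))) (hclose : f N = f 0)
    (hinj : Set.InjOn f (Set.Iio N)) :
    ∃ v, ∃ p : G.Walk v v, p.IsHamiltonianCycle := by
  obtain ⟨n, rfl⟩ : ∃ n, N = n + 3 := ⟨N - 3, by omega⟩
  have hsucc (v : Fin (n + 3)) : G.Adj (f v) (f ↑(v + 1)) := by
    rw [Fin.val_add_one]
    split_ifs with h
    · simpa [h, ← hclose] using hadj (n + 2)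
    · exact hadj v
  let φ : cycleGraph (n + 3) →g G :=
    { toFun := fun v => f v
      map_rel' := by
        intro u v huv
        rcases cycleGraph_adj.1 huv with h | h
        · rw [sub_eq_iff_eq_add'] at h
          exact h ▸ (hsucc v).symm
        · rw [sub_eq_iff_eq_add'] at h
          exact h ▸ hsucc u }
  have hφ : Function.Bijective φ := (Fintype.bijective_iff_injective_and_card φ).2
    ⟨fun u v h => Fin.ext (hinj u.isLt v.isLt h), by simp [hcard]⟩
  exact ⟨_, (cycleGraph.cycle n).map φ, (cycleGraph.isHamiltonianCycle_cycle n).map hφ⟩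

end SimpleGraph

theorem Nat.add_one_div_mod_cases {g : ℕ} (hg : 0 < g) (n : ℕ) :
    ((n + 1) / g = n / g ∧ (n + 1) % g = n % g + 1) ∨
      (n % g = g - 1 ∧ (n + 1) / g = n / g + 1 ∧ (n + 1) % g = 0) := by
  have hlt := Nat.mod_lt n hg
  have hdm := Nat.div_add_mod n g
  rcases Nat.lt_or_ge (n % g + 1) g with h | h
  · exact .inl ((Nat.div_mod_unique hg).2 ⟨by omega, h⟩)
  · refine .inr ⟨by omega, (Nat.div_mod_unique hg).2 ⟨?_, hg⟩⟩
    rw [Nat.mul_add]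
    omega

section TwistedGrid

variable {i j k : ℕ}

theorem twistedGrid_adj_add_one (hi : i ≠ 1) (b : Fin j) (a : ZMod i) :
    (twistedGrid i j k).Adj (b, a) (b, a + 1) := by
  have : Nontrivial (ZMod i) := ZMod.nontrivial_iff.2 hi
  exact (SimpleGraph.fromRel_adj _ _ _).2 ⟨by simp, .inl (.inl ⟨rfl, rfl⟩)⟩

theorem twistedGrid_adj_of_val_eq_add_one {b b' : Fin j} (h : (b' : ℕ) = b + 1) (a : ZMod i) :
    (twistedGrid i j k).Adj (b, a) (b', a) :=
  (SimpleGraph.fromRel_adj _ _ _).2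
    ⟨by simp [Fin.ext_iff, h], .inl (.inr (.inl ⟨h, rfl⟩))⟩

theorem twistedGrid_adj_wrap (hj : j ≠ 1) {b b' : Fin j} (hb : (b : ℕ) = j - 1)
    (hb' : (b' : ℕ) = 0) (a : ZMod i) : (twistedGrid i j k).Adj (b, a) (b', a + k) :=
  (SimpleGraph.fromRel_adj _ _ _).2
    ⟨by simp [Fin.ext_iff, hb, hb']; omega, .inl (.inr (.inr ⟨hb, hb', rfl⟩))⟩

def snakeOffset (g b c : ℕ) : ℕ := if Even b then c else g - 1 - c

theorem snakeOffset_lt {g c : ℕ} (b : ℕ) (hc : c < g) : snakeOffset g b c < g := by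
  unfold snakeOffset; split_ifs <;> omega

theorem snakeOffset_injOn (g b : ℕ) : Set.InjOn (snakeOffset g b) (Set.Iio g) := by
  intro c hc c' hc' h
  simp only [Set.mem_Iio] at hc hc'
  unfold snakeOffset at h; split_ifs at h <;> omega

def twistedGridSnake (i j k g : ℕ) [NeZero j] (n : ℕ) : Fin j × ZMod i :=
  (Fin.ofNat j (n / g), (n / g / j) • (k : ZMod i) + (snakeOffset g (n / g) (n % g) : ℕ))

variable [NeZero j]

theorem twistedGridSnake_adj_add_one {g : ℕ} (hg : 0 < g) (hi : i ≠ 1) (hj : Even j) (n : ℕ) :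
    (twistedGrid i j k).Adj (twistedGridSnake i j k g n) (twistedGridSnake i j k g (n + 1)) := by
  have hj1 : j ≠ 1 := by rintro rfl; exact Nat.not_even_one hj
  rcases Nat.add_one_div_mod_cases hg n with ⟨hq, hc⟩ | ⟨hc, hq, hc0⟩
  · have hlt : n % g + 1 < g := hc ▸ Nat.mod_lt _ hg
    simp only [twistedGridSnake, hq, hc, snakeOffset]
    split_ifs
    · rw [Nat.cast_add, Nat.cast_one, ← add_assoc]
      exact twistedGrid_adj_add_one hi _ _
    · rw [show g - 1 - n % g = g - 1 - (n % g + 1) + 1 by omega, Nat.cast_add, Nat.cast_one,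
        ← add_assoc]
      exact (twistedGrid_adj_add_one hi _ _).symm
  · rcases Nat.add_one_div_mod_cases (NeZero.pos j) (n / g) with ⟨hb, hr⟩ | ⟨hr, hb, hr0⟩
    · simp only [twistedGridSnake, hq, hb, hc, hc0, snakeOffset, Nat.even_add_one]
      convert twistedGrid_adj_of_val_eq_add_one (k := k) (b := Fin.ofNat j (n / g))
        (b' := Fin.ofNat j (n / g + 1)) (by simp [hr]) _ using 4
      split_ifs <;> omega
    · have hodd : ¬ Even (n / g) := by
        have hpos := NeZero.pos j
        have hsucc : n / g + 1 = j * (n / g / j + 1) := by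
          have := Nat.div_add_mod (n / g) j
          rw [Nat.mul_add]; omega
        rw [← Nat.even_add_one, hsucc]
        exact hj.mul_right _
      simp only [twistedGridSnake, hq, hb, hc, hc0, snakeOffset, if_neg hodd, succ_nsmul]
      simp only [Nat.sub_self, Nat.even_add_one, hodd, if_true, not_false_eq_true,
        Nat.cast_zero, add_zero]
      exact twistedGrid_adj_wrap hj1 (by simp [hr]) (by simp [hr0]) _

theorem twistedGridSnake_mul_eq_twistedGridSnake_zero (hi : i ≠ 0) (hj : Even j) :
    twistedGridSnake i j k (i.gcd k) (j * i) = twistedGridSnake i j k (i.gcd k) 0 := by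
  have hg : i.gcd k ∣ i := Nat.gcd_dvd_left i k
  have hq : j * i / i.gcd k = j * (i / i.gcd k) := Nat.mul_div_assoc j hg
  have hpass : j * (i / i.gcd k) / j = addOrderOf (k : ZMod i) := by
    rw [ZMod.addOrderOf_coe k hi, Nat.mul_div_cancel_left _ (NeZero.pos j)]
  simp only [twistedGridSnake, hq, hpass, addOrderOf_nsmul_eq_zero]
  simp [snakeOffset, Nat.mod_eq_zero_of_dvd (dvd_mul_of_dvd_right hg j), hj]

theorem twistedGridSnake_injOn [NeZero i] :
    Set.InjOn (twistedGridSnake i j k (i.gcd k)) (Set.Iio (j * i)) := by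
  intro x hx y hy hxy
  set g := i.gcd k
  have hg : 0 < g := Nat.gcd_pos_of_pos_left _ (NeZero.pos i)
  obtain ⟨hrow, hcol⟩ := Prod.ext_iff.1 hxy
  simp only [twistedGridSnake, Fin.ext_iff, Fin.val_ofNat] at hrow hcol
  -- `g ∣ k`, so modulo `g` the pass shifts vanish and only the offsets remain.
  have hoff : snakeOffset g (x / g) (x % g) = snakeOffset g (y / g) (y % g) := by
    have hk : (k : ZMod g) = 0 := (ZMod.natCast_eq_zero_iff _ _).2 (Nat.gcd_dvd_right i k)
    have := congrArg (ZMod.castHom (Nat.gcd_dvd_left i k) (ZMod g)) hcol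
    simp only [map_add, map_nsmul, map_natCast, hk, smul_zero, zero_add,
      ZMod.natCast_eq_natCast_iff'] at this
    rwa [Nat.mod_eq_of_lt (snakeOffset_lt _ (Nat.mod_lt _ hg)),
      Nat.mod_eq_of_lt (snakeOffset_lt _ (Nat.mod_lt _ hg))] at this
  have hpass_lt {z : ℕ} (hz : z < j * i) : z / g / j ∈ Set.Iio (addOrderOf (k : ZMod i)) := by
    rw [Set.mem_Iio, ZMod.addOrderOf_coe k (NeZero.ne i), Nat.div_div_eq_div_mul,
      Nat.div_lt_iff_lt_mul (Nat.mul_pos hg (NeZero.pos j))]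
    calc z < j * i := hz
      _ = i / g * (g * j) := by
        rw [← mul_assoc, Nat.div_mul_cancel (Nat.gcd_dvd_left i k), mul_comm]
  have hpass : x / g / j = y / g / j :=
    nsmul_injOn_Iio_addOrderOf (hpass_lt hx) (hpass_lt hy) (by simpa [hoff] using hcol)
  have hq : x / g = y / g := by
    rw [← Nat.div_add_mod (x / g) j, ← Nat.div_add_mod (y / g) j, hrow, hpass]
  have hc : x % g = y % g :=
    snakeOffset_injOn g _ (Nat.mod_lt _ hg) (Nat.mod_lt _ hg) (hq ▸ hoff)
  rw [← Nat.div_add_mod x g, ← Nat.div_add_mod y g, hq, hc]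

theorem twistedGrid_exists_isHamiltonianCycle (k : ℕ) (hi : 2 ≤ i) (hj : Even j) :
    ∃ v, ∃ c : (twistedGrid i j k).Walk v v, c.IsHamiltonianCycle := by
  have : NeZero i := ⟨by omega⟩
  have hj2 : 2 ≤ j := by
    have := NeZero.ne j
    rcases hj with ⟨r, rfl⟩; omega
  exact SimpleGraph.exists_isHamiltonianCycle_of_injOn (N := j * i) (by nlinarith)
    (by simp) _ (twistedGridSnake_adj_add_one (Nat.gcd_pos_of_pos_left _ (by omega))
      (by omega) hj) (twistedGridSnake_mul_eq_twistedGridSnake_zero (by omega) hj)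
    twistedGridSnake_injOn

end TwistedGrid

theorem dsem_3_6_3_3_4_2_2_hamiltonian_general (m i j k : ℕ) (hm : 1 ≤ m) (hj : j = 4 * m)
    (hi : 3 ≤ i) :
    ∃ (v : Fin j × ZMod i)
      (c : (twistedGrid i j k ⊔ SimpleGraph.fromRel (fun p q : Fin j × ZMod i =>
        (((p.1 : ℕ) % 4 = 1 ∨ (p.1 : ℕ) % 4 = 2 ∨ (p.1 : ℕ) % 4 = 3) ∧
          (q.1 : ℕ) = (p.1 : ℕ) + 1 ∧ q.2 = p.2 + 1) ∨
        ((p.1 : ℕ) = j - 1 ∧ (q.1 : ℕ) = 0 ∧ q.2 = p.2 + (k : ZMod i) + 1))).Walk v v),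
      c.IsHamiltonianCycle := by
  have : NeZero j := ⟨by omega⟩
  obtain ⟨v, c, hc⟩ :=
    twistedGrid_exists_isHamiltonianCycle (i := i) (j := j) k (by omega) ⟨2 * m, by omega⟩
  exact ⟨v, c.map (.ofLE le_sup_left), hc.map Function.bijective_id⟩

/-- The edge graph of the doubly semi-equivelar map of type `[3⁶:3³.4²]₂` in its
`M(i,j,k)`-representation (`j = 4m`): the twisted toroidal grid together with diagonal
edges `{(b,a),(b+1,a+1)}` for rows `b ≡ 1, 2, 3 (mod 4)` and the wrap-around diagonals
`{(j-1,a),(0,a+k+1)}`, is Hamiltonian. -/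
theorem dsem_3_6_3_3_4_2_2_hamiltonian (m i j k : ℕ) (hm : 1 ≤ m) (hj : j = 4 * m)
    (hi : 3 ≤ i) (hk : k ≤ i - 1) :
    ∃ (v : Fin j × ZMod i)
      (c : (twistedGrid i j k ⊔ SimpleGraph.fromRel (fun p q : Fin j × ZMod i =>
        (((p.1 : ℕ) % 4 = 1 ∨ (p.1 : ℕ) % 4 = 2 ∨ (p.1 : ℕ) % 4 = 3) ∧
          (q.1 : ℕ) = (p.1 : ℕ) + 1 ∧ q.2 = p.2 + 1) ∨
        ((p.1 : ℕ) = j - 1 ∧ (q.1 : ℕ) = 0 ∧ q.2 = p.2 + (k : ZMod i) + 1))).Walk v v),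
      c.IsHamiltonianCycle :=
  dsem_3_6_3_3_4_2_2_hamiltonian_general m i j k hm hj hi
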